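/- Let γ > 1 and let γ* = γ/(γ−1) be its Hölder conjugate. The map w : M_γ → ℂ² defined by w(ζ₁,ζ₂) = ( conj(ζ₁)·|ζ₁|^{γ−2}, (ζ₂ − iγ|ζ₁|^γ)/(1−γ) ) for ζ₁ ≠ 0 and w(0,ζ₂) = (0, ζ₂/(1−γ)), is a bijection from M_γ onto M_{γ*}, with inverse given by ζ₁ = conj(w₁)·|w₁|^{(2−γ)/(γ−1)} (and ζ₁ = 0 when w₁ = 0) and ζ₂ = (1−γ) w₂ + iγ |w₁|^{γ/(γ−1)}. -/

import Mathlib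

noncomputable section

/-- The hypersurface `M_γ = {(ζ₁,ζ₂) ∈ ℂ² : Im ζ₂ = |ζ₁|^γ}`. -/
def Mset (γ : ℝ) : Set (ℂ × ℂ) := {ζ : ℂ × ℂ | ζ.2.im = ‖ζ.1‖ ^ γ}

/-- The dualization map `w(ζ₁,ζ₂) = (conj(ζ₁)|ζ₁|^{γ−2}, (ζ₂ − iγ|ζ₁|^γ)/(1−γ))`.
(When `ζ₁ = 0` the first coordinate is `0` and the second is `ζ₂/(1−γ)`, since
`|ζ₁|^γ = 0`.) -/
def wmap (γ : ℝ) (ζ : ℂ × ℂ) : ℂ × ℂ :=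
  ((starRingEnd ℂ) ζ.1 * ((‖ζ.1‖ ^ (γ - 2) : ℝ) : ℂ),
    (ζ.2 - Complex.I * (γ : ℂ) * ((‖ζ.1‖ ^ γ : ℝ) : ℂ)) / (1 - (γ : ℂ)))

/-- The inverse dualization map, `ζ₁ = conj(w₁)|w₁|^{(2−γ)/(γ−1)}`,
`ζ₂ = (1−γ) w₂ + iγ |w₁|^{γ/(γ−1)}`. -/
def wmapInv (γ : ℝ) (w : ℂ × ℂ) : ℂ × ℂ :=
  ((starRingEnd ℂ) w.1 * ((‖w.1‖ ^ ((2 - γ) / (γ - 1)) : ℝ) : ℂ),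
    (1 - (γ : ℂ)) * w.2 + Complex.I * (γ : ℂ) * ((‖w.1‖ ^ (γ / (γ - 1)) : ℝ) : ℂ))

private lemma abs_conj_mul_rpow (z : ℂ) (t : ℝ) :
    ‖((starRingEnd ℂ) z * ((‖z‖ ^ t : ℝ) : ℂ))‖ =
      ‖z‖ * ‖z‖ ^ t := by
  rw [norm_mul, Complex.norm_conj, Complex.norm_real, Real.norm_eq_abs,
    abs_of_nonneg (Real.rpow_nonneg (norm_nonneg z) t)]

private lemma mul_rpow_self (x : ℝ) (hx : 0 ≤ x) (t : ℝ) (h : 1 + t ≠ 0) :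
    x * x ^ t = x ^ (1 + t) := by
  rw [Real.rpow_add' hx h, Real.rpow_one]

/-- For `γ > 1` with Hölder conjugate `γ* = γ/(γ−1)`, the map `w` is a
bijection from `M_γ` onto `M_{γ*}`, with two-sided inverse given by `wmapInv`. -/
theorem wmap_bijOn_dual (γ : ℝ) (hγ : 1 < γ) :
    Set.BijOn (wmap γ) (Mset γ) (Mset (γ / (γ - 1))) ∧
    Set.InvOn (wmapInv γ) (wmap γ) (Mset γ) (Mset (γ / (γ - 1))) := by
  have hγ1 : γ - 1 ≠ 0 := by linarith
  have hγ1' : (0:ℝ) < γ - 1 := by linarith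
  have h1γ : (1:ℝ) - γ ≠ 0 := by linarith
  have hcast : (1:ℂ) - (γ:ℂ) = ((1 - γ : ℝ) : ℂ) := by push_cast; ring
  have hcne : (1:ℂ) - (γ:ℂ) ≠ 0 := by
    rw [hcast]; exact_mod_cast h1γ
  -- |w₁(ζ)| = |ζ₁|^(γ-1)
  have key1 : ∀ z : ℂ,
      ‖((starRingEnd ℂ) z * ((‖z‖ ^ (γ - 2) : ℝ) : ℂ))‖ =
        ‖z‖ ^ (γ - 1) := by
    intro z
    rw [abs_conj_mul_rpow, mul_rpow_self _ (norm_nonneg z) _ (by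
      intro h; apply hγ1; linarith)]
    ring_nf
  have key2 : ∀ z : ℂ, (‖z‖ ^ (γ - 1)) ^ (γ / (γ - 1)) = ‖z‖ ^ γ := by
    intro z
    rw [← Real.rpow_mul (norm_nonneg z)]
    congr 1
    field_simp
  -- |ζ₁(w)| = |w₁|^(1/(γ-1))
  have key1' : ∀ z : ℂ,
      ‖((starRingEnd ℂ) z * ((‖z‖ ^ ((2 - γ) / (γ - 1)) : ℝ) : ℂ))‖ =
        ‖z‖ ^ (1 / (γ - 1)) := by
    intro z
    have he : 1 + (2 - γ) / (γ - 1) = 1 / (γ - 1) := by field_simp; ring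
    rw [abs_conj_mul_rpow, mul_rpow_self _ (norm_nonneg z) _ (by
      rw [he]; positivity), he]
  have key2' : ∀ z : ℂ, (‖z‖ ^ (1 / (γ - 1))) ^ γ = ‖z‖ ^ (γ / (γ - 1)) := by
    intro z
    rw [← Real.rpow_mul (norm_nonneg z)]
    congr 1
    field_simp
  -- left inverse (everywhere)
  have hleft : ∀ ζ : ℂ × ℂ, wmapInv γ (wmap γ ζ) = ζ := by
    intro ζ
    have hB : ‖(wmap γ ζ).1‖ ^ (γ / (γ - 1)) = ‖ζ.1‖ ^ γ := by
      rw [show (wmap γ ζ).1 = (starRingEnd ℂ) ζ.1 * ((‖ζ.1‖ ^ (γ - 2) : ℝ) : ℂ)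
        from rfl, key1, key2]
    refine Prod.ext ?_ ?_
    · show (starRingEnd ℂ) ((starRingEnd ℂ) ζ.1 * ((‖ζ.1‖ ^ (γ - 2) : ℝ) : ℂ)) *
        ((‖((starRingEnd ℂ) ζ.1 * ((‖ζ.1‖ ^ (γ - 2) : ℝ) : ℂ))‖
          ^ ((2 - γ) / (γ - 1)) : ℝ) : ℂ) = ζ.1
      rw [key1, map_mul, Complex.conj_conj, Complex.conj_ofReal,
        ← Real.rpow_mul (norm_nonneg ζ.1),
        show (γ - 1) * ((2 - γ) / (γ - 1)) = 2 - γ by field_simp]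
      rcases eq_or_ne ζ.1 0 with h0 | h0
      · simp [h0]
      · have hpos : 0 < ‖ζ.1‖ := norm_pos_iff.mpr h0
        rw [mul_assoc, ← Complex.ofReal_mul, ← Real.rpow_add hpos]
        norm_num
    · show (1 - (γ:ℂ)) * ((ζ.2 - Complex.I * (γ:ℂ) * ((‖ζ.1‖ ^ γ : ℝ) : ℂ)) /
          (1 - (γ:ℂ))) + Complex.I * (γ:ℂ) *
          ((‖(wmap γ ζ).1‖ ^ (γ / (γ - 1)) : ℝ) : ℂ) = ζ.2
      rw [hB, mul_div_cancel₀ _ hcne]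
      ring
  -- right inverse (everywhere)
  have hright : ∀ w : ℂ × ℂ, wmap γ (wmapInv γ w) = w := by
    intro w
    have hC : ‖(wmapInv γ w).1‖ ^ γ = ‖w.1‖ ^ (γ / (γ - 1)) := by
      rw [show (wmapInv γ w).1 = (starRingEnd ℂ) w.1 *
        ((‖w.1‖ ^ ((2 - γ) / (γ - 1)) : ℝ) : ℂ) from rfl, key1', key2']
    refine Prod.ext ?_ ?_
    · show (starRingEnd ℂ) ((starRingEnd ℂ) w.1 *
          ((‖w.1‖ ^ ((2 - γ) / (γ - 1)) : ℝ) : ℂ)) *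
        ((‖((starRingEnd ℂ) w.1 * ((‖w.1‖ ^ ((2 - γ) / (γ - 1)) : ℝ) : ℂ))‖
          ^ (γ - 2) : ℝ) : ℂ) = w.1
      rw [key1', map_mul, Complex.conj_conj, Complex.conj_ofReal,
        ← Real.rpow_mul (norm_nonneg w.1),
        show 1 / (γ - 1) * (γ - 2) = (γ - 2) / (γ - 1) by ring]
      rcases eq_or_ne w.1 0 with h0 | h0
      · simp [h0]
      · have hpos : 0 < ‖w.1‖ := norm_pos_iff.mpr h0
        rw [mul_assoc, ← Complex.ofReal_mul, ← Real.rpow_add hpos,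
          show (2 - γ) / (γ - 1) + (γ - 2) / (γ - 1) = 0 by field_simp; ring]
        norm_num
    · show ((1 - (γ:ℂ)) * w.2 + Complex.I * (γ:ℂ) *
          ((‖w.1‖ ^ (γ / (γ - 1)) : ℝ) : ℂ) -
          Complex.I * (γ:ℂ) * ((‖(wmapInv γ w).1‖ ^ γ : ℝ) : ℂ)) /
          (1 - (γ:ℂ)) = w.2
      rw [hC]
      field_simp
      ring
  -- forward MapsTo
  have hmt1 : Set.MapsTo (wmap γ) (Mset γ) (Mset (γ / (γ - 1))) := by
    intro ζ hζ
    have hζ' : ζ.2.im = ‖ζ.1‖ ^ γ := hζ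
    show (wmap γ ζ).2.im = ‖(wmap γ ζ).1‖ ^ (γ / (γ - 1))
    have hrhs : ‖(wmap γ ζ).1‖ ^ (γ / (γ - 1)) = ‖ζ.1‖ ^ γ := by
      rw [show (wmap γ ζ).1 = (starRingEnd ℂ) ζ.1 * ((‖ζ.1‖ ^ (γ - 2) : ℝ) : ℂ)
        from rfl, key1, key2]
    rw [hrhs]
    show ((ζ.2 - Complex.I * (γ:ℂ) * ((‖ζ.1‖ ^ γ : ℝ) : ℂ)) / (1 - (γ:ℂ))).im =
      ‖ζ.1‖ ^ γ
    rw [hcast, Complex.div_ofReal_im]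
    simp only [Complex.sub_im, Complex.mul_im, Complex.mul_re, Complex.I_re, Complex.I_im,
      Complex.ofReal_re, Complex.ofReal_im, hζ']
    field_simp
    ring
  -- backward MapsTo
  have hmt2 : Set.MapsTo (wmapInv γ) (Mset (γ / (γ - 1))) (Mset γ) := by
    intro w hw
    have hw' : w.2.im = ‖w.1‖ ^ (γ / (γ - 1)) := hw
    show (wmapInv γ w).2.im = ‖(wmapInv γ w).1‖ ^ γ
    have hrhs : ‖(wmapInv γ w).1‖ ^ γ = ‖w.1‖ ^ (γ / (γ - 1)) := by
      rw [show (wmapInv γ w).1 = (starRingEnd ℂ) w.1 *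
        ((‖w.1‖ ^ ((2 - γ) / (γ - 1)) : ℝ) : ℂ) from rfl, key1', key2']
    rw [hrhs]
    show ((1 - (γ:ℂ)) * w.2 + Complex.I * (γ:ℂ) *
      ((‖w.1‖ ^ (γ / (γ - 1)) : ℝ) : ℂ)).im = ‖w.1‖ ^ (γ / (γ - 1))
    rw [hcast]
    simp only [Complex.add_im, Complex.mul_im, Complex.mul_re, Complex.I_re, Complex.I_im,
      Complex.ofReal_re, Complex.ofReal_im, hw']
    ring
  have hinv : Set.InvOn (wmapInv γ) (wmap γ) (Mset γ) (Mset (γ / (γ - 1))) :=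
    ⟨fun ζ _ => hleft ζ, fun w _ => hright w⟩
  exact ⟨hinv.bijOn hmt1 hmt2, hinv⟩
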